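/- arXiv:2510.00747 — 3 statements merged into one kernel-verified Lean document; each statement's English description precedes it below -/
import Mathlib

section
/- For every finite totally ordered set partitioned as [q] = D ⊔ E and every non-crossing partition π of D, there exists a unique non-crossing partition π̃ of E such that (1) π ⊔ π̃ is a non-crossing partition of [q], and (2) every non-crossing partition ρ of E with π ⊔ ρ non-crossing satisfies ρ ≤ π̃. -/
open Finset

attribute [local instance] Classical.propDecidable

/-- `P` is a non-crossing partition of the finite set `S ⊆ ℕ`. -/
def IsNCPartition (S : Finset ℕ) (P : Finset (Finset ℕ)) : Prop :=
  (∀ B ∈ P, B.Nonempty) ∧ (∀ B ∈ P, B ⊆ S) ∧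
  (∀ x ∈ S, ∃ B ∈ P, x ∈ B) ∧
  (∀ B ∈ P, ∀ B' ∈ P, B ≠ B' → Disjoint B B') ∧
  (∀ B ∈ P, ∀ B' ∈ P, B ≠ B' →
    ∀ a ∈ B, ∀ b ∈ B', ∀ c ∈ B, ∀ d ∈ B', ¬ (a < b ∧ b < c ∧ c < d))

/-- Refinement order on partitions: every block of `P` is contained in a block of `Q`. -/
def refines (P Q : Finset (Finset ℕ)) : Prop := ∀ B ∈ P, ∃ C ∈ Q, B ⊆ C

/-- The finite set of all non-crossing partitions of `S`. -/
noncomputable def NCset (S : Finset ℕ) : Finset (Finset (Finset ℕ)) :=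
  S.powerset.powerset.filter (IsNCPartition S)

/-- Multiplicative extension of a family of functionals `f n : (Fin n → A) → ℂ` over a
partition `P`: each block contributes `f |C|` evaluated on the entries of `a` indexed by the
block, taken in increasing order. -/
noncomputable def extMul {A : Type*} (f : ∀ n, (Fin n → A) → ℂ)
    (P : Finset (Finset ℕ)) (a : ℕ → A) : ℂ :=
  ∏ C ∈ P, f C.card (fun i => a ((C.orderIsoOfFin rfl i : ℕ)))

/-- Freeness of a family of subsets with respect to a functional `τ`:
alternating centered products vanish. -/
def IsFreeFamily {E : Type*} [Monoid E] {I : Type*} (τ : E → ℂ) (B : I → Set E) : Prop :=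
  ∀ (q : ℕ), 1 ≤ q → ∀ (ind : Fin q → I) (a : Fin q → E),
    (∀ j, a j ∈ B (ind j)) → (∀ j, τ (a j) = 0) →
    (∀ j : Fin q, ∀ h : (j : ℕ) + 1 < q, ind j ≠ ind ⟨(j : ℕ) + 1, h⟩) →
    τ (List.ofFn a).prod = 0


namespace NCAux

/-- Block `B` of `π` separates `x < y`. -/
def Sep (π : Finset (Finset ℕ)) (x y : ℕ) : Prop :=
  ∃ B ∈ π, (∃ b ∈ B, x < b ∧ b < y) ∧ (∃ b ∈ B, b < x ∨ y < b)

def Rel (π : Finset (Finset ℕ)) (x y : ℕ) : Prop :=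
  ¬ Sep π x y ∧ ¬ Sep π y x

lemma not_sep_of_le {π : Finset (Finset ℕ)} {x y : ℕ} (h : y ≤ x) : ¬ Sep π x y := by
  rintro ⟨B, -, ⟨b, -, h1, h2⟩, -⟩; omega

lemma rel_refl (π : Finset (Finset ℕ)) (x : ℕ) : Rel π x x :=
  ⟨not_sep_of_le le_rfl, not_sep_of_le le_rfl⟩

lemma rel_symm {π : Finset (Finset ℕ)} {x y : ℕ} (h : Rel π x y) : Rel π y x := ⟨h.2, h.1⟩

lemma keyA {π : Finset (Finset ℕ)} {x y z : ℕ} (hxy : x < y) (hyz : y < z)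
    (hy : ∀ B ∈ π, y ∉ B) (h : Sep π x z) : Sep π x y ∨ Sep π y z := by
  obtain ⟨B, hB, ⟨e, he, he1, he2⟩, ⟨f, hf, hf1⟩⟩ := h
  have hey : e ≠ y := fun h => hy B hB (h ▸ he)
  rcases lt_or_gt_of_ne hey with h1 | h1
  · exact Or.inl ⟨B, hB, ⟨e, he, he1, h1⟩, ⟨f, hf, by omega⟩⟩
  · exact Or.inr ⟨B, hB, ⟨e, he, h1, he2⟩, ⟨f, hf, by omega⟩⟩

lemma keyB {π : Finset (Finset ℕ)} {x y z : ℕ} (hyx : y < x) (hxz : x < z)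
    (hy : ∀ B ∈ π, y ∉ B) (h : Sep π x z) : Sep π y x ∨ Sep π y z := by
  obtain ⟨B, hB, ⟨e, he, he1, he2⟩, ⟨f, hf, hf1⟩⟩ := h
  rcases hf1 with hf1 | hf1
  · have hfy : f ≠ y := fun h => hy B hB (h ▸ hf)
    rcases lt_or_gt_of_ne hfy with h1 | h1
    · exact Or.inr ⟨B, hB, ⟨e, he, by omega, by omega⟩, ⟨f, hf, Or.inl h1⟩⟩
    · exact Or.inl ⟨B, hB, ⟨f, hf, h1, hf1⟩, ⟨e, he, by omega⟩⟩
  · exact Or.inr ⟨B, hB, ⟨e, he, by omega, by omega⟩, ⟨f, hf, by omega⟩⟩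

lemma keyC {π : Finset (Finset ℕ)} {x y z : ℕ} (hxz : x < z) (hzy : z < y)
    (hy : ∀ B ∈ π, y ∉ B) (h : Sep π x z) : Sep π x y ∨ Sep π z y := by
  obtain ⟨B, hB, ⟨e, he, he1, he2⟩, ⟨f, hf, hf1⟩⟩ := h
  rcases hf1 with hf1 | hf1
  · exact Or.inl ⟨B, hB, ⟨e, he, by omega, by omega⟩, ⟨f, hf, Or.inl hf1⟩⟩
  · have hfy : f ≠ y := fun h => hy B hB (h ▸ hf)
    rcases lt_or_gt_of_ne hfy with h1 | h1
    · exact Or.inr ⟨B, hB, ⟨f, hf, hf1, h1⟩, ⟨e, he, by omega⟩⟩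
    · exact Or.inl ⟨B, hB, ⟨e, he, by omega, by omega⟩, ⟨f, hf, Or.inr h1⟩⟩

lemma keyD {π : Finset (Finset ℕ)} {a b c d : ℕ} (hab : a < b) (hbc : b < c) (hcd : c < d)
    (ha : ∀ B ∈ π, a ∉ B) (h : Sep π b c) : Sep π a c ∨ Sep π b d := by
  obtain ⟨B, hB, ⟨e, he, he1, he2⟩, ⟨f, hf, hf1⟩⟩ := h
  rcases hf1 with hf1 | hf1
  · have hfa : f ≠ a := fun h => ha B hB (h ▸ hf)
    rcases lt_or_gt_of_ne hfa with h1 | h1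
    · exact Or.inl ⟨B, hB, ⟨e, he, by omega, by omega⟩, ⟨f, hf, Or.inl h1⟩⟩
    · exact Or.inr ⟨B, hB, ⟨e, he, by omega, by omega⟩, ⟨f, hf, Or.inl hf1⟩⟩
  · exact Or.inl ⟨B, hB, ⟨e, he, by omega, by omega⟩, ⟨f, hf, Or.inr hf1⟩⟩

lemma rel_trans_lt {π : Finset (Finset ℕ)} {x y z : ℕ} (hxz : x < z)
    (hy : ∀ B ∈ π, y ∉ B) (h1 : Rel π x y) (h2 : Rel π y z) : ¬ Sep π x z := by
  intro hs
  rcases Nat.lt_trichotomy y x with h | h | h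
  · rcases keyB h hxz hy hs with s | s
    · exact h1.2 s
    · exact h2.1 s
  · subst h; exact h2.1 hs
  · rcases Nat.lt_trichotomy y z with h' | h' | h'
    · rcases keyA h h' hy hs with s | s
      · exact h1.1 s
      · exact h2.1 s
    · subst h'; exact h1.1 hs
    · rcases keyC hxz h' hy hs with s | s
      · exact h1.1 s
      · exact h2.2 s

lemma rel_trans {π : Finset (Finset ℕ)} {x y z : ℕ}
    (hy : ∀ B ∈ π, y ∉ B) (h1 : Rel π x y) (h2 : Rel π y z) : Rel π x z := by
  rcases Nat.lt_trichotomy x z with h | h | h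
  · exact ⟨rel_trans_lt h hy h1 h2, not_sep_of_le h.le⟩
  · subst h; exact rel_refl π x
  · exact ⟨not_sep_of_le h.le, rel_trans_lt h hy (rel_symm h2) (rel_symm h1)⟩

end NCAux

/-- Lemma 6.4 (Jayakumar–Kodiyalam): existence and uniqueness of the maximal
non-crossing completion. -/
theorem stmt0 (D E : Finset ℕ) (hDE : Disjoint D E)
    (π : Finset (Finset ℕ)) (hπ : IsNCPartition D π) :
    ∃! πt : Finset (Finset ℕ),
      IsNCPartition E πt ∧ IsNCPartition (D ∪ E) (π ∪ πt) ∧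
      ∀ ρ : Finset (Finset ℕ), IsNCPartition E ρ →
        IsNCPartition (D ∪ E) (π ∪ ρ) → refines ρ πt := by
  classical
  obtain ⟨hπne, hπsub, hπcov, hπdisj, hπnc⟩ := hπ
  have hy : ∀ w ∈ E, ∀ B ∈ π, w ∉ B := fun w hw B hB hwB =>
    (Finset.disjoint_left.mp hDE (hπsub B hB hwB)) hw
  set cls : ℕ → Finset ℕ := fun x => E.filter (fun y => NCAux.Rel π x y) with hcls
  set πt : Finset (Finset ℕ) := E.image cls with hπtdef
  have mem_cls : ∀ x y : ℕ, y ∈ cls x ↔ y ∈ E ∧ NCAux.Rel π x y := by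
    intro x y; simp [hcls]
  have cls_eq : ∀ x ∈ E, ∀ y ∈ E, NCAux.Rel π x y → cls x = cls y := by
    intro x hx y hyE hxy
    ext w
    simp only [mem_cls]
    constructor
    · rintro ⟨hw, hrel⟩
      exact ⟨hw, NCAux.rel_trans (hy x hx) (NCAux.rel_symm hxy) hrel⟩
    · rintro ⟨hw, hrel⟩
      exact ⟨hw, NCAux.rel_trans (hy y hyE) hxy hrel⟩
  have self_mem_cls : ∀ x ∈ E, x ∈ cls x := fun x hx =>
    (mem_cls x x).mpr ⟨hx, NCAux.rel_refl π x⟩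
  have hπtNC : IsNCPartition E πt := by
    refine ⟨?_, ?_, ?_, ?_, ?_⟩
    · rintro B hB; obtain ⟨x, hx, rfl⟩ := Finset.mem_image.mp hB
      exact ⟨x, self_mem_cls x hx⟩
    · rintro B hB; obtain ⟨x, hx, rfl⟩ := Finset.mem_image.mp hB
      exact Finset.filter_subset _ _
    · intro x hx; exact ⟨cls x, Finset.mem_image_of_mem cls hx, self_mem_cls x hx⟩
    · rintro B hB B' hB' hne
      obtain ⟨x, hx, rfl⟩ := Finset.mem_image.mp hB
      obtain ⟨y, hyE, rfl⟩ := Finset.mem_image.mp hB'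
      rw [Finset.disjoint_left]
      intro z hz hz'
      obtain ⟨hzE, hxz⟩ := (mem_cls x z).mp hz
      obtain ⟨-, hyz⟩ := (mem_cls y z).mp hz'
      exact hne ((cls_eq x hx z hzE hxz).trans (cls_eq y hyE z hzE hyz).symm)
    · rintro B hB B' hB' hne a ha b hb c hc d hd ⟨h1, h2, h3⟩
      obtain ⟨x, hx, rfl⟩ := Finset.mem_image.mp hB
      obtain ⟨y, hyE, rfl⟩ := Finset.mem_image.mp hB'
      obtain ⟨haE, hxa⟩ := (mem_cls x a).mp ha
      obtain ⟨hbE, hyb⟩ := (mem_cls y b).mp hb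
      obtain ⟨hcE, hxc⟩ := (mem_cls x c).mp hc
      obtain ⟨hdE, hyd⟩ := (mem_cls y d).mp hd
      have hac : NCAux.Rel π a c := NCAux.rel_trans (hy x hx) (NCAux.rel_symm hxa) hxc
      have hbd : NCAux.Rel π b d := NCAux.rel_trans (hy y hyE) (NCAux.rel_symm hyb) hyd
      have hbc : NCAux.Rel π b c := by
        refine ⟨fun hs => ?_, NCAux.not_sep_of_le h2.le⟩
        rcases NCAux.keyD h1 h2 h3 (hy a haE) hs with s | s
        · exact hac.1 s
        · exact hbd.1 s
      have hab : NCAux.Rel π a b := NCAux.rel_trans (hy c hcE) hac (NCAux.rel_symm hbc)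
      exact hne ((cls_eq x hx a haE hxa).trans
        ((cls_eq a haE b hbE hab).trans (cls_eq y hyE b hbE hyb).symm))
  have hunionNC : IsNCPartition (D ∪ E) (π ∪ πt) := by
    refine ⟨?_, ?_, ?_, ?_, ?_⟩
    · intro B hB; rcases Finset.mem_union.mp hB with h | h
      · exact hπne B h
      · exact hπtNC.1 B h
    · intro B hB; rcases Finset.mem_union.mp hB with h | h
      · exact (hπsub B h).trans Finset.subset_union_left
      · exact (hπtNC.2.1 B h).trans Finset.subset_union_right
    · intro x hx; rcases Finset.mem_union.mp hx with h | h
      · obtain ⟨B, hB, hxB⟩ := hπcov x h; exact ⟨B, Finset.mem_union_left _ hB, hxB⟩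
      · obtain ⟨B, hB, hxB⟩ := hπtNC.2.2.1 x h
        exact ⟨B, Finset.mem_union_right _ hB, hxB⟩
    · intro B hB B' hB' hne
      rcases Finset.mem_union.mp hB with h | h <;> rcases Finset.mem_union.mp hB' with h' | h'
      · exact hπdisj B h B' h' hne
      · exact Disjoint.mono (hπsub B h) (hπtNC.2.1 B' h') hDE
      · exact (Disjoint.mono (hπsub B' h') (hπtNC.2.1 B h) hDE).symm
      · exact hπtNC.2.2.2.1 B h B' h' hne
    · intro B hB B' hB' hne a ha b hb c hc d hd hcross
      obtain ⟨h1, h2, h3⟩ := hcross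
      rcases Finset.mem_union.mp hB with h | h <;> rcases Finset.mem_union.mp hB' with h' | h'
      · exact hπnc B h B' h' hne a ha b hb c hc d hd ⟨h1, h2, h3⟩
      · obtain ⟨y, hyE, rfl⟩ := Finset.mem_image.mp h'
        obtain ⟨hbE, hyb⟩ := (mem_cls y b).mp hb
        obtain ⟨hdE, hyd⟩ := (mem_cls y d).mp hd
        have hbd : NCAux.Rel π b d := NCAux.rel_trans (hy y hyE) (NCAux.rel_symm hyb) hyd
        exact hbd.1 ⟨B, h, ⟨c, hc, h2, h3⟩, ⟨a, ha, Or.inl h1⟩⟩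
      · obtain ⟨x, hxE, rfl⟩ := Finset.mem_image.mp h
        obtain ⟨haE, hxa⟩ := (mem_cls x a).mp ha
        obtain ⟨hcE, hxc⟩ := (mem_cls x c).mp hc
        have hac : NCAux.Rel π a c := NCAux.rel_trans (hy x hxE) (NCAux.rel_symm hxa) hxc
        exact hac.1 ⟨B', h', ⟨b, hb, h1, h2⟩, ⟨d, hd, Or.inr h3⟩⟩
      · exact hπtNC.2.2.2.2 B h B' h' hne a ha b hb c hc d hd ⟨h1, h2, h3⟩
  have hmax : ∀ ρ : Finset (Finset ℕ), IsNCPartition E ρ →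
      IsNCPartition (D ∪ E) (π ∪ ρ) → refines ρ πt := by
    intro ρ hρ hU B hBρ
    obtain ⟨x, hxB⟩ := hρ.1 B hBρ
    have hxE : x ∈ E := hρ.2.1 B hBρ hxB
    refine ⟨cls x, Finset.mem_image_of_mem cls hxE, ?_⟩
    have key : ∀ u ∈ B, ∀ v ∈ B, ¬ NCAux.Sep π u v := by
      intro u hu v hv hs
      obtain ⟨P, hP, ⟨e, he, he1, he2⟩, ⟨f, hf, hf1⟩⟩ := hs
      have hPu : P ∈ π ∪ ρ := Finset.mem_union_left _ hP
      have hBu : B ∈ π ∪ ρ := Finset.mem_union_right _ hBρ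
      have hne : B ≠ P := by
        intro hEq
        obtain ⟨p, hp⟩ := hπne P hP
        exact (Finset.disjoint_left.mp hDE (hπsub P hP hp)) (hρ.2.1 B hBρ (hEq ▸ hp))
      rcases hf1 with hf1 | hf1
      · exact hU.2.2.2.2 P hPu B hBu (Ne.symm hne) f hf u hu e he v hv ⟨hf1, he1, he2⟩
      · exact hU.2.2.2.2 B hBu P hPu hne u hu e he v hv f hf ⟨he1, he2, hf1⟩
    intro z hzB
    exact (mem_cls x z).mpr ⟨hρ.2.1 B hBρ hzB, key x hxB z hzB, key z hzB x hxB⟩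
  have anti : ∀ P Q : Finset (Finset ℕ), IsNCPartition E P → IsNCPartition E Q →
      refines P Q → refines Q P → P ⊆ Q := by
    intro P Q hP hQ rPQ rQP B hB
    obtain ⟨C, hC, hBC⟩ := rPQ B hB
    obtain ⟨B', hB', hCB'⟩ := rQP C hC
    have hBB' : B = B' := by
      by_contra hne
      obtain ⟨x, hx⟩ := hP.1 B hB
      exact (Finset.disjoint_left.mp (hP.2.2.2.1 B hB B' hB' hne) hx) (hCB' (hBC hx))
    have : B = C := Finset.Subset.antisymm hBC (hBB' ▸ hCB')
    exact this ▸ hC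
  refine ⟨πt, ⟨hπtNC, hunionNC, hmax⟩, ?_⟩
  rintro πt' ⟨h1', h2', h3'⟩
  have r1 : refines πt πt' := h3' πt hπtNC hunionNC
  have r2 : refines πt' πt := hmax πt' h1' h2'
  exact Finset.Subset.antisymm (anti πt' πt h1' hπtNC r2 r1) (anti πt πt' hπtNC h1' r1 r2)
end

section
/- Let S be a set and let {φ_n : S^n → ℂ} and {κ_n : S^n → ℂ} be families of functions, extended multiplicatively over non-crossing partitions by φ_π(a_1,…,a_n) = ∏_{C ∈ π} φ_{|C|}(a_c : c ∈ C). Then the following are equivalent: (1) φ_n = Σ_{π ∈ NC(n)} κ_π for all n; (2) κ_n = Σ_{π ∈ NC(n)} μ(π, 1_n) φ_π for all n, where μ is the Möbius function of the lattice NC(n); (3) φ_τ = Σ_{π ≤ τ} κ_π for all n and all τ ∈ NC(n); (4) κ_τ = Σ_{π ≤ τ} μ(π, τ) φ_π for all n and all τ ∈ NC(n). -/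
open Finset

attribute [local instance] Classical.propDecidable

section Aux

lemma mem_NCset {S : Finset ℕ} {P : Finset (Finset ℕ)} :
    P ∈ NCset S ↔ IsNCPartition S P := by
  constructor
  · exact fun h => (Finset.mem_filter.1 h).2
  · intro h
    refine Finset.mem_filter.2 ⟨?_, h⟩
    refine Finset.mem_powerset.2 (fun B hB => Finset.mem_powerset.2 (h.2.1 B hB))

lemma refines_refl (P : Finset (Finset ℕ)) : refines P P :=
  fun B hB => ⟨B, hB, subset_rfl⟩

lemma refines_trans {P Q R : Finset (Finset ℕ)} (h1 : refines P Q) (h2 : refines Q R) :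
    refines P R := by
  intro B hB
  obtain ⟨C, hC, hBC⟩ := h1 B hB
  obtain ⟨D, hD, hCD⟩ := h2 C hC
  exact ⟨D, hD, hBC.trans hCD⟩

/-- A nonempty set contained in two blocks of a partition forces the blocks to be equal. -/
lemma block_unique {S : Finset ℕ} {τ : Finset (Finset ℕ)} (hτ : IsNCPartition S τ)
    {B C C' : Finset ℕ} (hB : B.Nonempty) (hC : C ∈ τ) (hC' : C' ∈ τ)
    (h1 : B ⊆ C) (h2 : B ⊆ C') : C = C' := by
  by_contra hne
  obtain ⟨x, hx⟩ := hB
  exact (Finset.disjoint_left.1 (hτ.2.2.2.1 C hC C' hC' hne)) (h1 hx) (h2 hx)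

lemma top_mem_NCset {n : ℕ} (hn : 1 ≤ n) :
    ({Finset.range n} : Finset (Finset ℕ)) ∈ NCset (Finset.range n) := by
  refine mem_NCset.2 ⟨?_, ?_, ?_, ?_, ?_⟩
  · intro B hB; rw [Finset.mem_singleton] at hB; subst hB
    exact Finset.nonempty_range_iff.2 (by omega)
  · intro B hB; rw [Finset.mem_singleton] at hB; subst hB; exact subset_rfl
  · intro x hx; exact ⟨_, Finset.mem_singleton_self _, hx⟩
  · intro B hB B' hB' hne
    rw [Finset.mem_singleton] at hB hB'; exact absurd (hB.trans hB'.symm) hne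
  · intro B hB B' hB' hne
    rw [Finset.mem_singleton] at hB hB'; exact absurd (hB.trans hB'.symm) hne

lemma refines_top {n : ℕ} {P : Finset (Finset ℕ)} (hP : P ∈ NCset (Finset.range n)) :
    refines P {Finset.range n} :=
  fun B hB => ⟨Finset.range n, Finset.mem_singleton_self _, (mem_NCset.1 hP).2.1 B hB⟩

end Aux

section Pmap

/-- Apply a function of `Fin n`-tuples to tuples of different (equal) lengths. -/
lemma fapp_congr {A : Type*} (f : ∀ n, (Fin n → A) → ℂ) {m n : ℕ} (h : m = n)
    (u : Fin m → A) (v : Fin n → A) (huv : ∀ i : Fin m, u i = v (Fin.cast h i)) :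
    f m u = f n v := by
  subst h
  have : u = v := funext fun i => huv i
  rw [this]

/-- Relabel a partition along a map `e`. -/
def pmap (e : ℕ → ℕ) (P : Finset (Finset ℕ)) : Finset (Finset ℕ) :=
  P.image (Finset.image e)

lemma refines_pmap {e : ℕ → ℕ} {P Q : Finset (Finset ℕ)} (h : refines P Q) :
    refines (pmap e P) (pmap e Q) := by
  intro B hB
  obtain ⟨B0, hB0, rfl⟩ := Finset.mem_image.1 hB
  obtain ⟨C, hC, hBC⟩ := h B0 hB0
  exact ⟨C.image e, Finset.mem_image_of_mem _ hC, Finset.image_subset_image hBC⟩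

lemma pmap_pmap {e e' : ℕ → ℕ} {S : Finset ℕ} {P : Finset (Finset ℕ)}
    (hP : ∀ B ∈ P, B ⊆ S) (h : ∀ x ∈ S, e' (e x) = x) :
    pmap e' (pmap e P) = P := by
  unfold pmap
  rw [Finset.image_image]
  rw [show P = P.image id from (Finset.image_id).symm]
  rw [Finset.image_image]
  apply Finset.image_congr
  intro B hB
  simp only [Function.comp_apply, Finset.image_image, id]
  rw [show B = B.image id from (Finset.image_id).symm]
  rw [Finset.image_image]
  apply Finset.image_congr
  intro x hx
  simp only [Function.comp_apply, id]
  exact h x (hP B (by simpa using hB) (by simpa using hx))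

lemma isNC_pmap {e : ℕ → ℕ} {S T : Finset ℕ} {P : Finset (Finset ℕ)}
    (he : StrictMonoOn e ↑S) (him : S.image e = T) (hP : IsNCPartition S P) :
    IsNCPartition T (pmap e P) := by
  obtain ⟨hne, hsub, hcov, hdisj, hnc⟩ := hP
  have hinj : Set.InjOn e ↑S := he.injOn
  have hlt : ∀ {x y : ℕ}, x ∈ S → y ∈ S → (e x < e y ↔ x < y) := by
    intro x y hx hy
    constructor
    · intro hxy
      rcases lt_trichotomy x y with h | h | h
      · exact h
      · subst h; exact absurd hxy (lt_irrefl _)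
      · exact absurd (he hy hx h) (by omega)
    · exact fun h => he hx hy h
  refine ⟨?_, ?_, ?_, ?_, ?_⟩
  · intro B hB
    obtain ⟨B0, hB0, rfl⟩ := Finset.mem_image.1 hB
    exact (hne B0 hB0).image e
  · intro B hB
    obtain ⟨B0, hB0, rfl⟩ := Finset.mem_image.1 hB
    rw [← him]
    exact Finset.image_subset_image (hsub B0 hB0)
  · intro y hy
    rw [← him] at hy
    obtain ⟨x, hx, rfl⟩ := Finset.mem_image.1 hy
    obtain ⟨B, hB, hxB⟩ := hcov x hx
    exact ⟨B.image e, Finset.mem_image_of_mem _ hB, Finset.mem_image_of_mem _ hxB⟩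
  · intro B hB B' hB' hBne
    obtain ⟨B0, hB0, rfl⟩ := Finset.mem_image.1 hB
    obtain ⟨B0', hB0', rfl⟩ := Finset.mem_image.1 hB'
    have hB0ne : B0 ≠ B0' := fun h => hBne (by rw [h])
    rw [Finset.disjoint_left]
    intro z hz hz'
    obtain ⟨x, hx, rfl⟩ := Finset.mem_image.1 hz
    obtain ⟨x', hx', hex⟩ := Finset.mem_image.1 hz'
    have : x' = x := hinj (hsub B0' hB0' hx') (hsub B0 hB0 hx) hex
    subst this
    exact Finset.disjoint_left.1 (hdisj B0 hB0 B0' hB0' hB0ne) hx hx'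
  · intro B hB B' hB' hBne a ha b hb c hc d hd habcd
    obtain ⟨B0, hB0, rfl⟩ := Finset.mem_image.1 hB
    obtain ⟨B0', hB0', rfl⟩ := Finset.mem_image.1 hB'
    have hB0ne : B0 ≠ B0' := fun h => hBne (by rw [h])
    obtain ⟨a0, ha0, rfl⟩ := Finset.mem_image.1 ha
    obtain ⟨b0, hb0, rfl⟩ := Finset.mem_image.1 hb
    obtain ⟨c0, hc0, rfl⟩ := Finset.mem_image.1 hc
    obtain ⟨d0, hd0, rfl⟩ := Finset.mem_image.1 hd
    have hsa := hsub B0 hB0 ha0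
    have hsb := hsub B0' hB0' hb0
    have hsc := hsub B0 hB0 hc0
    have hsd := hsub B0' hB0' hd0
    exact hnc B0 hB0 B0' hB0' hB0ne a0 ha0 b0 hb0 c0 hc0 d0 hd0
      ⟨(hlt hsa hsb).1 habcd.1, (hlt hsb hsc).1 habcd.2.1, (hlt hsc hsd).1 habcd.2.2⟩

lemma extMul_pmap {A : Type*} (f : ∀ n, (Fin n → A) → ℂ) {e : ℕ → ℕ} {S : Finset ℕ}
    {P : Finset (Finset ℕ)} (a : ℕ → A)
    (he : StrictMonoOn e ↑S) (hP : ∀ B ∈ P, B ⊆ S) :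
    extMul f (pmap e P) a = extMul f P (a ∘ e) := by
  unfold extMul pmap
  rw [Finset.prod_image ?hinj]
  case hinj =>
    intro B hB B' hB' him
    have h1 : ∀ {X Y : Finset ℕ}, X ∈ P → Y ∈ P → X.image e ⊆ Y.image e → X ⊆ Y := by
      intro X Y hX hY hXY x hx
      have : e x ∈ Y.image e := hXY (Finset.mem_image_of_mem _ hx)
      obtain ⟨y, hy, hey⟩ := Finset.mem_image.1 this
      have : y = x := he.injOn (hP Y hY hy) (hP X hX hx) hey
      subst this; exact hy
    exact Finset.Subset.antisymm (h1 hB hB' him.le) (h1 hB' hB him.ge)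
  apply Finset.prod_congr rfl
  intro B hB
  have hBS : B ⊆ S := hP B hB
  have hcard : (B.image e).card = B.card :=
    Finset.card_image_of_injOn (he.injOn.mono (by exact_mod_cast hBS))
  apply fapp_congr _ hcard
  intro i
  congr 1
  have hmono : StrictMono (fun j : Fin B.card => e (B.orderEmbOfFin rfl j)) := by
    intro x y hxy
    exact he (hBS (Finset.orderEmbOfFin_mem B rfl x)) (hBS (Finset.orderEmbOfFin_mem B rfl y))
      ((B.orderEmbOfFin rfl).strictMono hxy)
  have hmem : ∀ j : Fin B.card, e (B.orderEmbOfFin rfl j) ∈ B.image e :=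
    fun j => Finset.mem_image_of_mem _ (Finset.orderEmbOfFin_mem B rfl j)
  have key : (fun j : Fin B.card => e (B.orderEmbOfFin rfl j))
      = (B.image e).orderEmbOfFin hcard := Finset.orderEmbOfFin_unique hcard hmem hmono
  have key2 : ∀ j : Fin (B.image e).card,
      (B.image e).orderEmbOfFin rfl j = (B.image e).orderEmbOfFin hcard (Fin.cast hcard j) := by
    intro j
    have : (fun j : Fin (B.image e).card => (B.image e).orderEmbOfFin hcard (Fin.cast hcard j))
        = (B.image e).orderEmbOfFin rfl := by
      apply (Finset.orderEmbOfFin_unique rfl ?_ ?_).symm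
      · intro x; exact Finset.orderEmbOfFin_mem _ _ _
      · intro x y hxy
        exact ((B.image e).orderEmbOfFin hcard).strictMono (show (Fin.cast hcard x) < (Fin.cast hcard y) from hxy)
    rw [← this]
  calc ((B.image e).orderIsoOfFin rfl i : ℕ) = (B.image e).orderEmbOfFin rfl i := rfl
    _ = (B.image e).orderEmbOfFin hcard (Fin.cast hcard i) := key2 i
    _ = e (B.orderEmbOfFin rfl (Fin.cast hcard i)) := by rw [← key]
    _ = e ((B.orderIsoOfFin rfl (Fin.cast hcard i) : ℕ)) := rfl

end Pmap

section Emb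

/-- The increasing enumeration of `C`, as a map `ℕ → ℕ` (junk value `0` outside `range C.card`). -/
noncomputable def emb (C : Finset ℕ) : ℕ → ℕ :=
  fun j => if h : j < C.card then (C.orderIsoOfFin rfl ⟨j, h⟩ : ℕ) else 0

/-- The inverse enumeration, sending `x ∈ C` to its index. -/
noncomputable def unemb (C : Finset ℕ) : ℕ → ℕ :=
  fun x => if h : x ∈ C then ((C.orderIsoOfFin rfl).symm ⟨x, h⟩ : Fin C.card) else 0

lemma emb_lt {C : Finset ℕ} {j : ℕ} (h : j < C.card) :
    emb C j = (C.orderIsoOfFin rfl ⟨j, h⟩ : ℕ) := dif_pos h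

lemma emb_mem {C : Finset ℕ} {j : ℕ} (h : j < C.card) : emb C j ∈ C := by
  rw [emb_lt h]; exact (C.orderIsoOfFin rfl ⟨j, h⟩).2

lemma emb_strictMonoOn (C : Finset ℕ) : StrictMonoOn (emb C) ↑(Finset.range C.card) := by
  intro x hx y hy hxy
  simp only [Finset.coe_range, Set.mem_Iio] at hx hy
  rw [emb_lt hx, emb_lt hy]
  have : C.orderIsoOfFin rfl ⟨x, hx⟩ < C.orderIsoOfFin rfl ⟨y, hy⟩ :=
    (C.orderIsoOfFin rfl).strictMono (show (⟨x, hx⟩ : Fin C.card) < ⟨y, hy⟩ from hxy)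
  exact_mod_cast this

lemma unemb_mem {C : Finset ℕ} {x : ℕ} (h : x ∈ C) :
    unemb C x ∈ Finset.range C.card := by
  unfold unemb
  rw [dif_pos h]
  exact Finset.mem_range.2 (((C.orderIsoOfFin rfl).symm ⟨x, h⟩).2)

lemma unemb_emb {C : Finset ℕ} {j : ℕ} (h : j < C.card) : unemb C (emb C j) = j := by
  have hm : emb C j ∈ C := emb_mem h
  unfold unemb
  rw [dif_pos hm]
  have : (⟨emb C j, hm⟩ : C) = C.orderIsoOfFin rfl ⟨j, h⟩ := by
    ext; exact emb_lt h
  rw [this, OrderIso.symm_apply_apply]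

lemma emb_unemb {C : Finset ℕ} {x : ℕ} (h : x ∈ C) : emb C (unemb C x) = x := by
  have h1 : unemb C x = ((C.orderIsoOfFin rfl).symm ⟨x, h⟩ : Fin C.card) := dif_pos h
  have h2 : unemb C x < C.card := by rw [h1]; exact ((C.orderIsoOfFin rfl).symm ⟨x, h⟩).2
  rw [emb_lt h2]
  have : (⟨unemb C x, h2⟩ : Fin C.card) = (C.orderIsoOfFin rfl).symm ⟨x, h⟩ := by
    ext; exact h1
  rw [this, OrderIso.apply_symm_apply]

lemma image_emb (C : Finset ℕ) : (Finset.range C.card).image (emb C) = C := by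
  apply Finset.Subset.antisymm
  · intro y hy
    obtain ⟨j, hj, rfl⟩ := Finset.mem_image.1 hy
    exact emb_mem (Finset.mem_range.1 hj)
  · intro x hx
    exact Finset.mem_image.2 ⟨unemb C x, unemb_mem hx, emb_unemb hx⟩

lemma image_unemb (C : Finset ℕ) : C.image (unemb C) = Finset.range C.card := by
  apply Finset.Subset.antisymm
  · intro y hy
    obtain ⟨x, hx, rfl⟩ := Finset.mem_image.1 hy
    exact unemb_mem hx
  · intro j hj
    rw [Finset.mem_range] at hj
    exact Finset.mem_image.2 ⟨emb C j, emb_mem hj, unemb_emb hj⟩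

lemma unemb_strictMonoOn (C : Finset ℕ) : StrictMonoOn (unemb C) ↑C := by
  intro x hx y hy hxy
  simp only [Finset.mem_coe] at hx hy
  rcases lt_trichotomy (unemb C x) (unemb C y) with h | h | h
  · exact h
  · exfalso
    have := congrArg (emb C) h
    rw [emb_unemb hx, emb_unemb hy] at this
    omega
  · exfalso
    have h1 := unemb_mem hx
    have h2 := unemb_mem hy
    rw [Finset.mem_range] at h1 h2
    have := emb_strictMonoOn C (by simpa using h2) (by simpa using h1) h
    rw [emb_unemb hx, emb_unemb hy] at this
    omega

/-- Transport of sums over `NCset C` along the enumeration of `C`. -/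
lemma sum_relabel (C : Finset ℕ) (w : Finset (Finset ℕ) → ℂ) :
    ∑ Q ∈ NCset C, w Q
      = ∑ Q ∈ NCset (Finset.range C.card), w (pmap (emb C) Q) := by
  apply Finset.sum_nbij' (i := pmap (unemb C)) (j := pmap (emb C))
  · intro Q hQ
    exact mem_NCset.2 (isNC_pmap (unemb_strictMonoOn C) (image_unemb C) (mem_NCset.1 hQ))
  · intro Q hQ
    exact mem_NCset.2 (isNC_pmap (emb_strictMonoOn C) (image_emb C) (mem_NCset.1 hQ))
  · intro Q hQ
    exact pmap_pmap (mem_NCset.1 hQ).2.1 (fun x hx => emb_unemb hx)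
  · intro Q hQ
    exact pmap_pmap (mem_NCset.1 hQ).2.1 (fun j hj => unemb_emb (Finset.mem_range.1 hj))
  · intro Q hQ
    rw [pmap_pmap (mem_NCset.1 hQ).2.1 (fun x hx => emb_unemb hx)]

lemma pmap_emb_cancel {C : Finset ℕ} {Q : Finset (Finset ℕ)}
    (hQ : ∀ B ∈ Q, B ⊆ Finset.range C.card) :
    pmap (unemb C) (pmap (emb C) Q) = Q :=
  pmap_pmap hQ (fun j hj => unemb_emb (Finset.mem_range.1 hj))

lemma pmap_unemb_cancel {C : Finset ℕ} {Q : Finset (Finset ℕ)}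
    (hQ : ∀ B ∈ Q, B ⊆ C) :
    pmap (emb C) (pmap (unemb C) Q) = Q :=
  pmap_pmap hQ (fun x hx => emb_unemb hx)

end Emb

section Glue

variable {S : Finset ℕ} {τ : Finset (Finset ℕ)}

/-- Glue together partitions of the blocks of `τ`. -/
def glue (τ : Finset (Finset ℕ)) (g : ∀ C ∈ τ, Finset (Finset ℕ)) : Finset (Finset ℕ) :=
  τ.attach.biUnion (fun C => g C.1 C.2)

lemma mem_glue {g : ∀ C ∈ τ, Finset (Finset ℕ)} {B : Finset ℕ} :
    B ∈ glue τ g ↔ ∃ C, ∃ hC : C ∈ τ, B ∈ g C hC := by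
  unfold glue
  rw [Finset.mem_biUnion]
  constructor
  · rintro ⟨⟨C, hC⟩, -, hB⟩; exact ⟨C, hC, hB⟩
  · rintro ⟨C, hC, hB⟩; exact ⟨⟨C, hC⟩, Finset.mem_attach _ _, hB⟩

lemma restrict_isNC (hτ : IsNCPartition S τ) {C : Finset ℕ} (hC : C ∈ τ)
    {P : Finset (Finset ℕ)} (hP : IsNCPartition S P) (hPτ : refines P τ) :
    IsNCPartition C (P.filter (· ⊆ C)) := by
  obtain ⟨hne, hsub, hcov, hdisj, hnc⟩ := hP
  refine ⟨?_, ?_, ?_, ?_, ?_⟩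
  · intro B hB; exact hne B (Finset.mem_filter.1 hB).1
  · intro B hB; exact (Finset.mem_filter.1 hB).2
  · intro x hx
    obtain ⟨B, hB, hxB⟩ := hcov x (hτ.2.1 C hC hx)
    obtain ⟨C', hC', hBC'⟩ := hPτ B hB
    have : C = C' := block_unique hτ (Finset.singleton_nonempty x) hC hC'
      (Finset.singleton_subset_iff.2 hx) (Finset.singleton_subset_iff.2 (hBC' hxB))
    exact ⟨B, Finset.mem_filter.2 ⟨hB, this ▸ hBC'⟩, hxB⟩
  · intro B hB B' hB' hne'
    exact hdisj B (Finset.mem_filter.1 hB).1 B' (Finset.mem_filter.1 hB').1 hne'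
  · intro B hB B' hB' hne'
    exact hnc B (Finset.mem_filter.1 hB).1 B' (Finset.mem_filter.1 hB').1 hne'

lemma glue_isNC (hτ : IsNCPartition S τ) {g : ∀ C ∈ τ, Finset (Finset ℕ)}
    (hg : ∀ C (hC : C ∈ τ), IsNCPartition C (g C hC)) :
    IsNCPartition S (glue τ g) := by
  refine ⟨?_, ?_, ?_, ?_, ?_⟩
  · intro B hB
    obtain ⟨C, hC, hBg⟩ := mem_glue.1 hB
    exact (hg C hC).1 B hBg
  · intro B hB
    obtain ⟨C, hC, hBg⟩ := mem_glue.1 hB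
    exact ((hg C hC).2.1 B hBg).trans (hτ.2.1 C hC)
  · intro x hx
    obtain ⟨C, hC, hxC⟩ := hτ.2.2.1 x hx
    obtain ⟨B, hB, hxB⟩ := (hg C hC).2.2.1 x hxC
    exact ⟨B, mem_glue.2 ⟨C, hC, hB⟩, hxB⟩
  · intro B hB B' hB' hne
    obtain ⟨C, hC, hBg⟩ := mem_glue.1 hB
    obtain ⟨C', hC', hBg'⟩ := mem_glue.1 hB'
    by_cases hCC : C = C'
    · subst hCC
      exact (hg C hC).2.2.2.1 B hBg B' hBg' hne
    · exact Finset.disjoint_left.2 (fun z hz hz' =>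
        Finset.disjoint_left.1 (hτ.2.2.2.1 C hC C' hC' hCC)
          ((hg C hC).2.1 B hBg hz) ((hg C' hC').2.1 B' hBg' hz'))
  · intro B hB B' hB' hne a ha b hb c hc d hd habcd
    obtain ⟨C, hC, hBg⟩ := mem_glue.1 hB
    obtain ⟨C', hC', hBg'⟩ := mem_glue.1 hB'
    by_cases hCC : C = C'
    · subst hCC
      exact (hg C hC).2.2.2.2 B hBg B' hBg' hne a ha b hb c hc d hd habcd
    · exact hτ.2.2.2.2 C hC C' hC' hCC a ((hg C hC).2.1 B hBg ha)
        b ((hg C' hC').2.1 B' hBg' hb) c ((hg C hC).2.1 B hBg hc)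
        d ((hg C' hC').2.1 B' hBg' hd) habcd

lemma glue_refines {g : ∀ C ∈ τ, Finset (Finset ℕ)}
    (hg : ∀ C (hC : C ∈ τ), ∀ B ∈ g C hC, B ⊆ C) :
    refines (glue τ g) τ := by
  intro B hB
  obtain ⟨C, hC, hBg⟩ := mem_glue.1 hB
  exact ⟨C, hC, hg C hC B hBg⟩

lemma restrict_glue (hτ : IsNCPartition S τ) {g : ∀ C ∈ τ, Finset (Finset ℕ)}
    (hg : ∀ C (hC : C ∈ τ), IsNCPartition C (g C hC))
    {C : Finset ℕ} (hC : C ∈ τ) :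
    (glue τ g).filter (· ⊆ C) = g C hC := by
  ext B
  rw [Finset.mem_filter]
  constructor
  · rintro ⟨hB, hBC⟩
    obtain ⟨C', hC', hBg⟩ := mem_glue.1 hB
    have : C = C' := block_unique hτ ((hg C' hC').1 B hBg) hC hC'
      hBC ((hg C' hC').2.1 B hBg)
    subst this; exact hBg
  · intro hB
    exact ⟨mem_glue.2 ⟨C, hC, hB⟩, (hg C hC).2.1 B hB⟩

lemma glue_restrict (hP : IsNCPartition S P) (hPτ : refines P τ) :
    glue τ (fun C _ => P.filter (· ⊆ C)) = P := by
  ext B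
  rw [mem_glue]
  constructor
  · rintro ⟨C, hC, hB⟩
    exact (Finset.mem_filter.1 hB).1
  · intro hB
    obtain ⟨C, hC, hBC⟩ := hPτ B hB
    exact ⟨C, hC, Finset.mem_filter.2 ⟨hB, hBC⟩⟩

lemma extMul_glue {A : Type*} (f : ∀ n, (Fin n → A) → ℂ) (a : ℕ → A)
    (hτ : IsNCPartition S τ) {g : ∀ C ∈ τ, Finset (Finset ℕ)}
    (hg : ∀ C (hC : C ∈ τ), IsNCPartition C (g C hC)) :
    extMul f (glue τ g) a = ∏ C ∈ τ.attach, extMul f (g C.1 C.2) a := by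
  unfold extMul glue
  apply Finset.prod_biUnion
  intro C hC C' hC' hne
  show Disjoint (g C.1 C.2) (g C'.1 C'.2)
  rw [Finset.disjoint_left]
  intro D hD hD'
  have hCC : C.1 ≠ C'.1 := fun h => hne (Subtype.ext h)
  obtain ⟨x, hx⟩ := (hg C.1 C.2).1 D hD
  exact Finset.disjoint_left.1 (hτ.2.2.2.1 C.1 C.2 C'.1 C'.2 hCC)
    ((hg C.1 C.2).2.1 D hD hx) ((hg C'.1 C'.2).2.1 D hD' hx)

lemma refines_glue_iff (hτ : IsNCPartition S τ) {g : ∀ C ∈ τ, Finset (Finset ℕ)}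
    (hg : ∀ C (hC : C ∈ τ), IsNCPartition C (g C hC))
    {π : Finset (Finset ℕ)} (hπ : IsNCPartition S π) (hπτ : refines π τ) :
    refines π (glue τ g) ↔ ∀ C (hC : C ∈ τ), refines (π.filter (· ⊆ C)) (g C hC) := by
  constructor
  · intro h C hC B hB
    rw [Finset.mem_filter] at hB
    obtain ⟨D, hD, hBD⟩ := h B hB.1
    obtain ⟨C', hC', hDg⟩ := mem_glue.1 hD
    have hBne := hπ.1 B hB.1
    have : C = C' := block_unique hτ hBne hC hC' hB.2 (hBD.trans ((hg C' hC').2.1 D hDg))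
    subst this
    exact ⟨D, hDg, hBD⟩
  · intro h B hB
    obtain ⟨C, hC, hBC⟩ := hπτ B hB
    obtain ⟨D, hD, hBD⟩ := h C hC B (Finset.mem_filter.2 ⟨hB, hBC⟩)
    exact ⟨D, mem_glue.2 ⟨C, hC, hD⟩, hBD⟩

/-- The master bijection: summing over refinements of `τ` is summing over independent choices
of a noncrossing partition of each block of `τ`. -/
lemma sum_filter_refines (hτ : τ ∈ NCset S) (w : Finset (Finset ℕ) → ℂ) :
    ∑ P ∈ (NCset S).filter (fun P => refines P τ), w P
      = ∑ g ∈ τ.pi (fun C => NCset C), w (glue τ g) := by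
  have hτ' := mem_NCset.1 hτ
  apply Finset.sum_bij' (i := fun P _ => fun C (_ : C ∈ τ) => P.filter (· ⊆ C))
    (j := fun g _ => glue τ g)
  · intro P hP
    rw [Finset.mem_filter] at hP
    refine Finset.mem_pi.2 (fun C hC => mem_NCset.2 ?_)
    exact restrict_isNC hτ' hC (mem_NCset.1 hP.1) hP.2
  · intro g hg
    rw [Finset.mem_pi] at hg
    refine Finset.mem_filter.2 ⟨mem_NCset.2 ?_, ?_⟩
    · exact glue_isNC hτ' (fun C hC => mem_NCset.1 (hg C hC))
    · exact glue_refines (fun C hC => (mem_NCset.1 (hg C hC)).2.1)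
  · intro P hP
    rw [Finset.mem_filter] at hP
    exact glue_restrict (mem_NCset.1 hP.1) hP.2
  · intro g hg
    rw [Finset.mem_pi] at hg
    funext C hC
    exact restrict_glue hτ' (fun C hC => mem_NCset.1 (hg C hC)) hC
  · intro P hP
    rw [Finset.mem_filter] at hP
    rw [glue_restrict (mem_NCset.1 hP.1) hP.2]

end Glue

section Algebra

lemma prod_ite_all {ι : Type*} (s : Finset ι) (p : ι → Prop) [DecidablePred p]
    [Decidable (∀ i ∈ s, p i)] (x : ι → ℂ) :
    (∏ i ∈ s, (if p i then x i else 0))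
      = if (∀ i ∈ s, p i) then ∏ i ∈ s, x i else 0 := by
  by_cases h : ∀ i ∈ s, p i
  · rw [if_pos h]
    exact Finset.prod_congr rfl (fun i hi => if_pos (h i hi))
  · rw [if_neg h]
    push_neg at h
    obtain ⟨i, hi, hpi⟩ := h
    exact Finset.prod_eq_zero hi (if_neg hpi)

lemma extMul_top {A : Type*} (f : ∀ n, (Fin n → A) → ℂ) (n : ℕ) (a : ℕ → A) :
    extMul f {Finset.range n} a = f n (fun i => a i.1) := by
  unfold extMul
  rw [Finset.prod_singleton]
  apply fapp_congr _ (Finset.card_range n)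
  intro i
  congr 1
  have key : (fun j : Fin (Finset.range n).card => ((Finset.range n).orderIsoOfFin rfl j : ℕ))
      = fun j : Fin (Finset.range n).card => (j : ℕ) := by
    symm
    apply Finset.orderEmbOfFin_unique (f := fun j : Fin (Finset.range n).card => (j : ℕ)) rfl
    · intro x
      have := x.2
      simp only [Finset.card_range] at this
      simpa using this
    · exact fun x y hxy => hxy
  calc ((Finset.range n).orderIsoOfFin rfl i : ℕ) = (i : ℕ) := congrFun key i
    _ = ((Fin.cast (Finset.card_range n) i : Fin n) : ℕ) := rfl

lemma filter_refines_top {n : ℕ} :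
    (NCset (Finset.range n)).filter (fun P => refines P {Finset.range n})
      = NCset (Finset.range n) :=
  Finset.filter_true_of_mem (fun P hP => refines_top hP)

/-- Exchange a double sum over nested refinements. -/
lemma sum_swap_refines {n : ℕ} (τ : Finset (Finset ℕ))
    (t : Finset (Finset ℕ) → Finset (Finset ℕ) → ℂ) :
    (∑ P ∈ (NCset (Finset.range n)).filter (fun P => refines P τ),
      ∑ R ∈ (NCset (Finset.range n)).filter (fun R => refines R P), t P R)
    = ∑ R ∈ NCset (Finset.range n),
        ∑ P ∈ (NCset (Finset.range n)).filter (fun P => refines R P ∧ refines P τ), t P R := by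
  rw [Finset.sum_filter]
  have h1 : ∀ P, (if refines P τ then
        ∑ R ∈ (NCset (Finset.range n)).filter (fun R => refines R P), t P R else 0)
      = ∑ R ∈ NCset (Finset.range n),
          (if refines R P ∧ refines P τ then t P R else 0) := by
    intro P
    by_cases h : refines P τ
    · rw [if_pos h, Finset.sum_filter]
      exact Finset.sum_congr rfl (fun R _ => by
        by_cases h2 : refines R P
        · rw [if_pos h2, if_pos ⟨h2, h⟩]
        · rw [if_neg h2, if_neg (fun hc => h2 hc.1)])
    · rw [if_neg h, eq_comm]
      exact Finset.sum_eq_zero (fun R _ => if_neg (fun hc => h hc.2))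
  rw [Finset.sum_congr rfl (fun P _ => h1 P), Finset.sum_comm]
  exact Finset.sum_congr rfl (fun R _ => by rw [Finset.sum_filter])

end Algebra

section MatrixInv

variable {n : ℕ}

/-- The matrix on noncrossing partitions associated with a two-variable function,
supported on comparable pairs. -/
noncomputable def toMat (n : ℕ) (f : Finset (Finset ℕ) → Finset (Finset ℕ) → ℂ) :
    Matrix {x // x ∈ NCset (Finset.range n)} {x // x ∈ NCset (Finset.range n)} ℂ :=
  fun p t => if refines p.1 t.1 then f p.1 t.1 else 0

lemma toMat_mul_apply (f g : Finset (Finset ℕ) → Finset (Finset ℕ) → ℂ)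
    (p t : {x // x ∈ NCset (Finset.range n)}) :
    (toMat n f * toMat n g) p t
      = ∑ r ∈ (NCset (Finset.range n)).filter
          (fun r => refines p.1 r ∧ refines r t.1), f p.1 r * g r t.1 := by
  rw [Matrix.mul_apply, Finset.sum_filter]
  rw [← Finset.sum_coe_sort (NCset (Finset.range n))
    (fun r => if refines p.1 r ∧ refines r t.1 then f p.1 r * g r t.1 else 0)]
  apply Finset.sum_congr rfl
  intro r _
  unfold toMat
  by_cases h1 : refines p.1 r.1
  · by_cases h2 : refines r.1 t.1
    · rw [if_pos h1, if_pos h2, if_pos ⟨h1, h2⟩]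
    · rw [if_pos h1, if_neg h2, mul_zero, if_neg (fun hc : refines p.1 r.1 ∧ refines r.1 t.1 => h2 hc.2)]
  · rw [if_neg h1, zero_mul, if_neg (fun hc : refines p.1 r.1 ∧ refines r.1 t.1 => h1 hc.1)]

lemma toMat_Z_mul_eq_one (f : Finset (Finset ℕ) → Finset (Finset ℕ) → ℂ)
    (hf : ∀ π ∈ NCset (Finset.range n), ∀ τ ∈ NCset (Finset.range n), refines π τ →
      (∑ ρ ∈ (NCset (Finset.range n)).filter (fun ρ => refines π ρ ∧ refines ρ τ), f ρ τ)
        = if π = τ then 1 else 0) :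
    toMat n (fun _ _ => 1) * toMat n f = 1 := by
  ext p t
  rw [toMat_mul_apply]
  simp only [one_mul]
  by_cases h : refines p.1 t.1
  · rw [hf p.1 p.2 t.1 t.2 h, Matrix.one_apply]
    by_cases he : p = t
    · rw [if_pos he, if_pos (by rw [he])]
    · rw [if_neg he, if_neg (fun hc => he (Subtype.ext hc))]
  · rw [Matrix.one_apply, if_neg (fun hc : p = t => h (hc ▸ refines_refl p.1))]
    apply Finset.sum_eq_zero
    intro r hr
    rw [Finset.mem_filter] at hr
    exact absurd (refines_trans hr.2.1 hr.2.2) h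

/-- From the "column" recursion for `f`, derive the "row" recursion. -/
lemma row_recursion (f : Finset (Finset ℕ) → Finset (Finset ℕ) → ℂ)
    (hf : ∀ π ∈ NCset (Finset.range n), ∀ τ ∈ NCset (Finset.range n), refines π τ →
      (∑ ρ ∈ (NCset (Finset.range n)).filter (fun ρ => refines π ρ ∧ refines ρ τ), f ρ τ)
        = if π = τ then 1 else 0) :
    ∀ π ∈ NCset (Finset.range n), ∀ τ ∈ NCset (Finset.range n),
      (∑ ρ ∈ (NCset (Finset.range n)).filter (fun ρ => refines π ρ ∧ refines ρ τ), f π ρ)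
        = if π = τ then 1 else 0 := by
  have h1 : toMat n f * toMat n (fun _ _ => 1) = 1 :=
    mul_eq_one_comm.1 (toMat_Z_mul_eq_one f hf)
  intro π hπ τ hτ
  have h2 := congrFun (congrFun h1 ⟨π, hπ⟩) ⟨τ, hτ⟩
  rw [toMat_mul_apply] at h2
  simp only [mul_one] at h2
  rw [h2, Matrix.one_apply]
  by_cases he : π = τ
  · rw [if_pos (Subtype.ext he), if_pos he]
  · rw [if_neg (fun hc : (⟨π, hπ⟩ : {x // x ∈ NCset (Finset.range n)}) = ⟨τ, hτ⟩ =>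
      he (Subtype.ext_iff.1 hc)), if_neg he]

/-- Uniqueness: two functions satisfying the column recursion agree on comparable pairs. -/
lemma recursion_unique (f g : Finset (Finset ℕ) → Finset (Finset ℕ) → ℂ)
    (hf : ∀ π ∈ NCset (Finset.range n), ∀ τ ∈ NCset (Finset.range n), refines π τ →
      (∑ ρ ∈ (NCset (Finset.range n)).filter (fun ρ => refines π ρ ∧ refines ρ τ), f ρ τ)
        = if π = τ then 1 else 0)
    (hg : ∀ π ∈ NCset (Finset.range n), ∀ τ ∈ NCset (Finset.range n), refines π τ →
      (∑ ρ ∈ (NCset (Finset.range n)).filter (fun ρ => refines π ρ ∧ refines ρ τ), g ρ τ)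
        = if π = τ then 1 else 0) :
    ∀ π ∈ NCset (Finset.range n), ∀ τ ∈ NCset (Finset.range n), refines π τ →
      f π τ = g π τ := by
  have h1 : toMat n f * toMat n (fun _ _ => 1) = 1 :=
    mul_eq_one_comm.1 (toMat_Z_mul_eq_one f hf)
  have h2 : toMat n (fun _ _ => 1) * toMat n g = 1 := toMat_Z_mul_eq_one g hg
  have h3 : toMat n f = toMat n g := by
    calc toMat n f = toMat n f * (toMat n (fun _ _ => 1) * toMat n g) := by rw [h2, mul_one]
      _ = (toMat n f * toMat n (fun _ _ => 1)) * toMat n g := by rw [mul_assoc]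
      _ = toMat n g := by rw [h1, one_mul]
  intro π hπ τ hτ hr
  have := congrFun (congrFun h3 ⟨π, hπ⟩) ⟨τ, hτ⟩
  unfold toMat at this
  rwa [if_pos hr, if_pos hr] at this

end MatrixInv

section Steps

variable {S : Type*} (φ κ : ∀ n, (Fin n → S) → ℂ)

lemma block_sum13 (h1 : ∀ n : ℕ, 1 ≤ n → ∀ a : ℕ → S,
      φ n (fun i => a i.1) = ∑ P ∈ NCset (Finset.range n), extMul κ P a)
    {C : Finset ℕ} (hC : C.Nonempty) (a : ℕ → S) :
    φ C.card (fun i => a ((C.orderIsoOfFin rfl i : ℕ))) = ∑ Q ∈ NCset C, extMul κ Q a := by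
  have hcard : 1 ≤ C.card := Finset.card_pos.2 hC
  have heq : (fun i : Fin C.card => (a ∘ emb C) i.1)
      = fun i : Fin C.card => a ((C.orderIsoOfFin rfl i : ℕ)) := by
    funext i
    show a (emb C i.1) = _
    rw [emb_lt i.2]
  calc φ C.card (fun i => a ((C.orderIsoOfFin rfl i : ℕ)))
      = φ C.card (fun i => (a ∘ emb C) i.1) := by rw [heq]
    _ = ∑ Q ∈ NCset (Finset.range C.card), extMul κ Q (a ∘ emb C) := h1 C.card hcard _
    _ = ∑ Q ∈ NCset C, extMul κ Q a := by
        rw [sum_relabel C (fun Q => extMul κ Q a)]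
        apply Finset.sum_congr rfl
        intro Q hQ
        exact (extMul_pmap κ a (emb_strictMonoOn C) (mem_NCset.1 hQ).2.1).symm

lemma step13 (h1 : ∀ n : ℕ, 1 ≤ n → ∀ a : ℕ → S,
      φ n (fun i => a i.1) = ∑ P ∈ NCset (Finset.range n), extMul κ P a) :
    ∀ n : ℕ, 1 ≤ n → ∀ τ ∈ NCset (Finset.range n), ∀ a : ℕ → S,
      extMul φ τ a = ∑ P ∈ (NCset (Finset.range n)).filter (fun P => refines P τ),
        extMul κ P a := by
  intro n hn τ hτ a
  have hτ' := mem_NCset.1 hτ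
  calc extMul φ τ a = ∏ C ∈ τ, ∑ Q ∈ NCset C, extMul κ Q a := by
        unfold extMul
        exact Finset.prod_congr rfl (fun C hC => block_sum13 φ κ h1 (hτ'.1 C hC) a)
    _ = ∑ g ∈ τ.pi (fun C => NCset C), ∏ C ∈ τ.attach, extMul κ (g C.1 C.2) a :=
        Finset.prod_sum _ _ _
    _ = ∑ g ∈ τ.pi (fun C => NCset C), extMul κ (glue τ g) a := by
        apply Finset.sum_congr rfl
        intro g hg
        rw [extMul_glue κ a hτ' (fun C hC => mem_NCset.1 (Finset.mem_pi.1 hg C hC))]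
    _ = ∑ P ∈ (NCset (Finset.range n)).filter (fun P => refines P τ), extMul κ P a :=
        (sum_filter_refines hτ (fun P => extMul κ P a)).symm

end Steps

section Steps2

variable {S : Type*} (φ κ : ∀ n, (Fin n → S) → ℂ)
  (μ : Finset (Finset ℕ) → Finset (Finset ℕ) → ℂ)

lemma step31 (h3 : ∀ n : ℕ, 1 ≤ n → ∀ τ ∈ NCset (Finset.range n), ∀ a : ℕ → S,
      extMul φ τ a = ∑ P ∈ (NCset (Finset.range n)).filter (fun P => refines P τ),
        extMul κ P a) :
    ∀ n : ℕ, 1 ≤ n → ∀ a : ℕ → S,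
      φ n (fun i => a i.1) = ∑ P ∈ NCset (Finset.range n), extMul κ P a := by
  intro n hn a
  have := h3 n hn {Finset.range n} (top_mem_NCset hn) a
  rwa [extMul_top, filter_refines_top] at this

lemma step42 (h4 : ∀ n : ℕ, 1 ≤ n → ∀ τ ∈ NCset (Finset.range n), ∀ a : ℕ → S,
      extMul κ τ a = ∑ P ∈ (NCset (Finset.range n)).filter (fun P => refines P τ),
        μ P τ * extMul φ P a) :
    ∀ n : ℕ, 1 ≤ n → ∀ a : ℕ → S,
      κ n (fun i => a i.1) = ∑ P ∈ NCset (Finset.range n),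
        μ P {Finset.range n} * extMul φ P a := by
  intro n hn a
  have := h4 n hn {Finset.range n} (top_mem_NCset hn) a
  rwa [extMul_top, filter_refines_top] at this

lemma delta_of_col {n : ℕ} {τ : Finset (Finset ℕ)} (hτ : τ ∈ NCset (Finset.range n))
    (f : Finset (Finset ℕ) → Finset (Finset ℕ) → ℂ)
    (hf : ∀ π ∈ NCset (Finset.range n), refines π τ →
      (∑ ρ ∈ (NCset (Finset.range n)).filter (fun ρ => refines π ρ ∧ refines ρ τ), f ρ τ)
        = if π = τ then 1 else 0) :
    ∀ R ∈ NCset (Finset.range n),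
      (∑ ρ ∈ (NCset (Finset.range n)).filter (fun ρ => refines R ρ ∧ refines ρ τ), f ρ τ)
        = if R = τ then 1 else 0 := by
  intro R hR
  by_cases h : refines R τ
  · exact hf R hR h
  · rw [if_neg (fun hc : R = τ => h (hc ▸ refines_refl R))]
    apply Finset.sum_eq_zero
    intro ρ hρ
    rw [Finset.mem_filter] at hρ
    exact absurd (refines_trans hρ.2.1 hρ.2.2) h

lemma step34 (hμ : ∀ n : ℕ, 1 ≤ n → ∀ π ∈ NCset (Finset.range n),
      ∀ τ ∈ NCset (Finset.range n), refines π τ →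
      (∑ ρ ∈ (NCset (Finset.range n)).filter (fun ρ => refines π ρ ∧ refines ρ τ), μ ρ τ)
        = if π = τ then 1 else 0)
    (h3 : ∀ n : ℕ, 1 ≤ n → ∀ τ ∈ NCset (Finset.range n), ∀ a : ℕ → S,
      extMul φ τ a = ∑ P ∈ (NCset (Finset.range n)).filter (fun P => refines P τ),
        extMul κ P a) :
    ∀ n : ℕ, 1 ≤ n → ∀ τ ∈ NCset (Finset.range n), ∀ a : ℕ → S,
      extMul κ τ a = ∑ P ∈ (NCset (Finset.range n)).filter (fun P => refines P τ),
        μ P τ * extMul φ P a := by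
  intro n hn τ hτ a
  symm
  calc ∑ P ∈ (NCset (Finset.range n)).filter (fun P => refines P τ), μ P τ * extMul φ P a
      = ∑ P ∈ (NCset (Finset.range n)).filter (fun P => refines P τ),
          ∑ R ∈ (NCset (Finset.range n)).filter (fun R => refines R P),
            μ P τ * extMul κ R a := by
        apply Finset.sum_congr rfl
        intro P hP
        rw [Finset.mem_filter] at hP
        rw [h3 n hn P hP.1 a, Finset.mul_sum]
    _ = ∑ R ∈ NCset (Finset.range n),
          ∑ P ∈ (NCset (Finset.range n)).filter (fun P => refines R P ∧ refines P τ),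
            μ P τ * extMul κ R a := sum_swap_refines τ _
    _ = ∑ R ∈ NCset (Finset.range n), (if R = τ then 1 else 0) * extMul κ R a := by
        apply Finset.sum_congr rfl
        intro R hR
        rw [← Finset.sum_mul]
        rw [delta_of_col hτ μ (fun π hπ hπτ => hμ n hn π hπ τ hτ hπτ) R hR]
    _ = extMul κ τ a := by
        rw [Finset.sum_congr rfl (fun R _ => ite_mul (α := ℂ) _ _ _ _)]
        simp only [one_mul, zero_mul]
        rw [Finset.sum_ite_eq' (NCset (Finset.range n)) τ (fun R => extMul κ R a)]
        rw [if_pos hτ]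

lemma step43 (hμ : ∀ n : ℕ, 1 ≤ n → ∀ π ∈ NCset (Finset.range n),
      ∀ τ ∈ NCset (Finset.range n), refines π τ →
      (∑ ρ ∈ (NCset (Finset.range n)).filter (fun ρ => refines π ρ ∧ refines ρ τ), μ ρ τ)
        = if π = τ then 1 else 0)
    (h4 : ∀ n : ℕ, 1 ≤ n → ∀ τ ∈ NCset (Finset.range n), ∀ a : ℕ → S,
      extMul κ τ a = ∑ P ∈ (NCset (Finset.range n)).filter (fun P => refines P τ),
        μ P τ * extMul φ P a) :
    ∀ n : ℕ, 1 ≤ n → ∀ τ ∈ NCset (Finset.range n), ∀ a : ℕ → S,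
      extMul φ τ a = ∑ P ∈ (NCset (Finset.range n)).filter (fun P => refines P τ),
        extMul κ P a := by
  intro n hn τ hτ a
  have hrow := row_recursion μ (fun π hπ τ' hτ' hr => hμ n hn π hπ τ' hτ' hr)
  symm
  calc ∑ P ∈ (NCset (Finset.range n)).filter (fun P => refines P τ), extMul κ P a
      = ∑ P ∈ (NCset (Finset.range n)).filter (fun P => refines P τ),
          ∑ R ∈ (NCset (Finset.range n)).filter (fun R => refines R P),
            μ R P * extMul φ R a := by
        apply Finset.sum_congr rfl
        intro P hP
        rw [Finset.mem_filter] at hP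
        rw [h4 n hn P hP.1 a]
    _ = ∑ R ∈ NCset (Finset.range n),
          ∑ P ∈ (NCset (Finset.range n)).filter (fun P => refines R P ∧ refines P τ),
            μ R P * extMul φ R a := sum_swap_refines τ _
    _ = ∑ R ∈ NCset (Finset.range n), (if R = τ then 1 else 0) * extMul φ R a := by
        apply Finset.sum_congr rfl
        intro R hR
        rw [← Finset.sum_mul]
        rw [hrow R hR τ hτ]
    _ = extMul φ τ a := by
        rw [Finset.sum_congr rfl (fun R _ => ite_mul (α := ℂ) _ _ _ _)]
        simp only [one_mul, zero_mul]
        rw [Finset.sum_ite_eq' (NCset (Finset.range n)) τ (fun R => extMul φ R a)]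
        rw [if_pos hτ]

end Steps2

section Nu

lemma restrict_self {S : Finset ℕ} {τ : Finset (Finset ℕ)} (hτ : IsNCPartition S τ)
    {C : Finset ℕ} (hC : C ∈ τ) : τ.filter (· ⊆ C) = {C} := by
  ext B
  rw [Finset.mem_filter, Finset.mem_singleton]
  constructor
  · rintro ⟨hB, hBC⟩
    exact block_unique hτ (hτ.1 B hB) hB hC subset_rfl hBC
  · rintro rfl
    exact ⟨hC, subset_rfl⟩

lemma pmap_singleton (e : ℕ → ℕ) (X : Finset ℕ) : pmap e {X} = {X.image e} := by
  unfold pmap; rw [Finset.image_singleton]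

/-- The multiplicative extension of the top-coefficients of `μ`. -/
noncomputable def nu (μ : Finset (Finset ℕ) → Finset (Finset ℕ) → ℂ)
    (P τ : Finset (Finset ℕ)) : ℂ :=
  ∏ C ∈ τ, μ (pmap (unemb C) (P.filter (· ⊆ C))) {Finset.range C.card}

variable {μ : Finset (Finset ℕ) → Finset (Finset ℕ) → ℂ}

lemma nu_col
    (hμ : ∀ n : ℕ, 1 ≤ n → ∀ π ∈ NCset (Finset.range n), ∀ τ ∈ NCset (Finset.range n),
      refines π τ →
      (∑ ρ ∈ (NCset (Finset.range n)).filter (fun ρ => refines π ρ ∧ refines ρ τ), μ ρ τ)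
        = if π = τ then 1 else 0)
    {n : ℕ} :
    ∀ π ∈ NCset (Finset.range n), ∀ τ ∈ NCset (Finset.range n), refines π τ →
      (∑ ρ ∈ (NCset (Finset.range n)).filter (fun ρ => refines π ρ ∧ refines ρ τ), nu μ ρ τ)
        = if π = τ then 1 else 0 := by
  intro π hπ τ hτ hπτ
  have hτ' := mem_NCset.1 hτ
  have hπ' := mem_NCset.1 hπ
  -- the restriction of π to a block C of τ, relabelled to an initial segment
  set π' : Finset ℕ → Finset (Finset ℕ) := fun C => pmap (unemb C) (π.filter (· ⊆ C)) with hπ'def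
  have hres : ∀ C ∈ τ, IsNCPartition C (π.filter (· ⊆ C)) :=
    fun C hC => restrict_isNC hτ' hC hπ' hπτ
  have hresb : ∀ C ∈ τ, ∀ B ∈ π.filter (· ⊆ C), B ⊆ C :=
    fun C hC B hB => (Finset.mem_filter.1 hB).2
  have hπ'mem : ∀ C ∈ τ, π' C ∈ NCset (Finset.range C.card) := fun C hC =>
    mem_NCset.2 (isNC_pmap (unemb_strictMonoOn C) (image_unemb C) (hres C hC))
  calc ∑ ρ ∈ (NCset (Finset.range n)).filter (fun ρ => refines π ρ ∧ refines ρ τ), nu μ ρ τ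
      = ∑ ρ ∈ (NCset (Finset.range n)).filter (fun ρ => refines ρ τ),
          (if refines π ρ then nu μ ρ τ else 0) := by
        rw [Finset.sum_filter, Finset.sum_filter]
        apply Finset.sum_congr rfl
        intro ρ _
        by_cases h1 : refines π ρ
        · by_cases h2 : refines ρ τ
          · rw [if_pos ⟨h1, h2⟩, if_pos h2, if_pos h1]
          · rw [if_neg (fun hc : refines π ρ ∧ refines ρ τ => h2 hc.2), if_neg h2]
        · by_cases h2 : refines ρ τ
          · rw [if_neg (fun hc : refines π ρ ∧ refines ρ τ => h1 hc.1), if_pos h2, if_neg h1]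
          · rw [if_neg (fun hc : refines π ρ ∧ refines ρ τ => h1 hc.1), if_neg h2]
    _ = ∑ g ∈ τ.pi (fun C => NCset C),
          (if refines π (glue τ g) then nu μ (glue τ g) τ else 0) :=
        sum_filter_refines hτ (fun ρ => if refines π ρ then nu μ ρ τ else 0)
    _ = ∑ g ∈ τ.pi (fun C => NCset C), ∏ C ∈ τ.attach,
          (if refines (π.filter (· ⊆ C.1)) (g C.1 C.2)
            then μ (pmap (unemb C.1) (g C.1 C.2)) {Finset.range C.1.card} else 0) := by
        apply Finset.sum_congr rfl
        intro g hg
        have hgmem : ∀ C (hC : C ∈ τ), IsNCPartition C (g C hC) :=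
          fun C hC => mem_NCset.1 (Finset.mem_pi.1 hg C hC)
        have hnu : nu μ (glue τ g) τ = ∏ C ∈ τ.attach,
            μ (pmap (unemb C.1) (g C.1 C.2)) {Finset.range C.1.card} := by
          unfold nu
          rw [← Finset.prod_attach τ
            (fun C => μ (pmap (unemb C) ((glue τ g).filter (· ⊆ C))) {Finset.range C.card})]
          exact Finset.prod_congr rfl
            (fun C _ => by rw [restrict_glue hτ' hgmem C.2])
        rw [prod_ite_all, hnu]
        rw [refines_glue_iff hτ' hgmem hπ' hπτ]
        by_cases h : ∀ C (hC : C ∈ τ), refines (π.filter (· ⊆ C)) (g C hC)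
        · rw [if_pos h, if_pos (fun (C : {x // x ∈ τ}) (_ : C ∈ τ.attach) => h C.1 C.2)]
        · push_neg at h
          obtain ⟨C, hC, hCne⟩ := h
          rw [if_neg (fun hc => hCne (hc C hC)),
            if_neg (fun hc : ∀ (i : {x // x ∈ τ}), i ∈ τ.attach →
                refines (π.filter (· ⊆ i.1)) (g i.1 i.2) =>
              hCne (hc ⟨C, hC⟩ (Finset.mem_attach _ _)))]
    _ = ∏ C ∈ τ, ∑ Q ∈ NCset C,
          (if refines (π.filter (· ⊆ C)) Q
            then μ (pmap (unemb C) Q) {Finset.range C.card} else 0) :=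
        (Finset.prod_sum τ (fun C => NCset C)
          (fun C Q => if refines (π.filter (· ⊆ C)) Q
            then μ (pmap (unemb C) Q) {Finset.range C.card} else 0)).symm
    _ = ∏ C ∈ τ, (if π' C = {Finset.range C.card} then 1 else 0) := by
        apply Finset.prod_congr rfl
        intro C hC
        have hm : 1 ≤ C.card := Finset.card_pos.2 (hτ'.1 C hC)
        rw [sum_relabel C (fun Q => if refines (π.filter (· ⊆ C)) Q
          then μ (pmap (unemb C) Q) {Finset.range C.card} else 0)]
        have hterm : ∀ Q ∈ NCset (Finset.range C.card),
            (if refines (π.filter (· ⊆ C)) (pmap (emb C) Q)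
              then μ (pmap (unemb C) (pmap (emb C) Q)) {Finset.range C.card} else 0)
            = (if refines (π' C) Q ∧ refines Q {Finset.range C.card}
              then μ Q {Finset.range C.card} else 0) := by
          intro Q hQ
          have hQ' := mem_NCset.1 hQ
          have hcancel : pmap (unemb C) (pmap (emb C) Q) = Q := pmap_emb_cancel hQ'.2.1
          have hiff : refines (π.filter (· ⊆ C)) (pmap (emb C) Q) ↔ refines (π' C) Q := by
            constructor
            · intro h
              have := refines_pmap (e := unemb C) h
              rwa [hcancel] at this
            · intro h
              have := refines_pmap (e := emb C) h
              rwa [pmap_unemb_cancel (hresb C hC)] at this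
          by_cases h : refines (π' C) Q
          · rw [if_pos (hiff.2 h), if_pos ⟨h, refines_top hQ⟩, hcancel]
          · rw [if_neg (fun hc => h (hiff.1 hc)),
              if_neg (fun hc : refines (π' C) Q ∧ _ => h hc.1)]
        rw [Finset.sum_congr rfl hterm, ← Finset.sum_filter]
        exact hμ C.card hm (π' C) (hπ'mem C hC) {Finset.range C.card} (top_mem_NCset hm)
          (refines_top (hπ'mem C hC))
    _ = if π = τ then 1 else 0 := by
        rw [prod_ite_all τ (fun C => π' C = {Finset.range C.card}) (fun _ => 1),
          Finset.prod_const_one]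
        apply if_congr _ rfl rfl
        constructor
        · intro h
          have hrestr : ∀ C ∈ τ, π.filter (· ⊆ C) = {C} := by
            intro C hC
            have := congrArg (pmap (emb C)) (h C hC)
            rwa [hπ'def, pmap_unemb_cancel (hresb C hC), pmap_singleton,
              image_emb] at this
          calc π = glue τ (fun C _ => π.filter (· ⊆ C)) := (glue_restrict hπ' hπτ).symm
            _ = glue τ (fun C _ => {C}) := by
                unfold glue
                exact Finset.biUnion_congr rfl (fun C _ => hrestr C.1 C.2)
            _ = τ := by
                unfold glue
                rw [Finset.biUnion_singleton, Finset.attach_image_val]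
        · rintro rfl C hC
          show pmap (unemb C) (π.filter (· ⊆ C)) = {Finset.range C.card}
          rw [restrict_self hτ' hC, pmap_singleton, image_unemb]

lemma mu_eq_nu
    (hμ : ∀ n : ℕ, 1 ≤ n → ∀ π ∈ NCset (Finset.range n), ∀ τ ∈ NCset (Finset.range n),
      refines π τ →
      (∑ ρ ∈ (NCset (Finset.range n)).filter (fun ρ => refines π ρ ∧ refines ρ τ), μ ρ τ)
        = if π = τ then 1 else 0)
    {n : ℕ} (hn : 1 ≤ n) :
    ∀ π ∈ NCset (Finset.range n), ∀ τ ∈ NCset (Finset.range n), refines π τ →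
      μ π τ = nu μ π τ :=
  recursion_unique μ (nu μ) (fun π hπ τ hτ hr => hμ n hn π hπ τ hτ hr) (nu_col hμ)

end Nu

section Steps3

variable {S : Type*} (φ κ : ∀ n, (Fin n → S) → ℂ)
  (μ : Finset (Finset ℕ) → Finset (Finset ℕ) → ℂ)

lemma nu_glue {S0 : Finset ℕ} {τ : Finset (Finset ℕ)} (hτ' : IsNCPartition S0 τ)
    {g : ∀ C ∈ τ, Finset (Finset ℕ)} (hgmem : ∀ C (hC : C ∈ τ), IsNCPartition C (g C hC)) :
    nu μ (glue τ g) τ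
      = ∏ C ∈ τ.attach, μ (pmap (unemb C.1) (g C.1 C.2)) {Finset.range C.1.card} := by
  unfold nu
  rw [← Finset.prod_attach τ
    (fun C => μ (pmap (unemb C) ((glue τ g).filter (· ⊆ C))) {Finset.range C.card})]
  exact Finset.prod_congr rfl (fun C _ => by rw [restrict_glue hτ' hgmem C.2])

lemma block_sum24
    (h2 : ∀ n : ℕ, 1 ≤ n → ∀ a : ℕ → S,
      κ n (fun i => a i.1) = ∑ P ∈ NCset (Finset.range n),
        μ P {Finset.range n} * extMul φ P a)
    {C : Finset ℕ} (hC : C.Nonempty) (a : ℕ → S) :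
    κ C.card (fun i => a ((C.orderIsoOfFin rfl i : ℕ)))
      = ∑ Q ∈ NCset C, μ (pmap (unemb C) Q) {Finset.range C.card} * extMul φ Q a := by
  have hcard : 1 ≤ C.card := Finset.card_pos.2 hC
  have heq : (fun i : Fin C.card => (a ∘ emb C) i.1)
      = fun i : Fin C.card => a ((C.orderIsoOfFin rfl i : ℕ)) := by
    funext i
    show a (emb C i.1) = _
    rw [emb_lt i.2]
  calc κ C.card (fun i => a ((C.orderIsoOfFin rfl i : ℕ)))
      = κ C.card (fun i => (a ∘ emb C) i.1) := by rw [heq]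
    _ = ∑ Q ∈ NCset (Finset.range C.card),
          μ Q {Finset.range C.card} * extMul φ Q (a ∘ emb C) := h2 C.card hcard _
    _ = ∑ Q ∈ NCset C, μ (pmap (unemb C) Q) {Finset.range C.card} * extMul φ Q a := by
        rw [sum_relabel C
          (fun Q => μ (pmap (unemb C) Q) {Finset.range C.card} * extMul φ Q a)]
        apply Finset.sum_congr rfl
        intro Q hQ
        rw [pmap_emb_cancel (mem_NCset.1 hQ).2.1,
          extMul_pmap φ a (emb_strictMonoOn C) (mem_NCset.1 hQ).2.1]

lemma step24
    (hμ : ∀ n : ℕ, 1 ≤ n → ∀ π ∈ NCset (Finset.range n), ∀ τ ∈ NCset (Finset.range n),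
      refines π τ →
      (∑ ρ ∈ (NCset (Finset.range n)).filter (fun ρ => refines π ρ ∧ refines ρ τ), μ ρ τ)
        = if π = τ then 1 else 0)
    (h2 : ∀ n : ℕ, 1 ≤ n → ∀ a : ℕ → S,
      κ n (fun i => a i.1) = ∑ P ∈ NCset (Finset.range n),
        μ P {Finset.range n} * extMul φ P a) :
    ∀ n : ℕ, 1 ≤ n → ∀ τ ∈ NCset (Finset.range n), ∀ a : ℕ → S,
      extMul κ τ a = ∑ P ∈ (NCset (Finset.range n)).filter (fun P => refines P τ),
        μ P τ * extMul φ P a := by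
  intro n hn τ hτ a
  have hτ' := mem_NCset.1 hτ
  calc extMul κ τ a
      = ∏ C ∈ τ, ∑ Q ∈ NCset C,
          μ (pmap (unemb C) Q) {Finset.range C.card} * extMul φ Q a := by
        unfold extMul
        exact Finset.prod_congr rfl (fun C hC => block_sum24 φ κ μ h2 (hτ'.1 C hC) a)
    _ = ∑ g ∈ τ.pi (fun C => NCset C), ∏ C ∈ τ.attach,
          (μ (pmap (unemb C.1) (g C.1 C.2)) {Finset.range C.1.card}
            * extMul φ (g C.1 C.2) a) :=
        Finset.prod_sum _ _ _
    _ = ∑ g ∈ τ.pi (fun C => NCset C), nu μ (glue τ g) τ * extMul φ (glue τ g) a := by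
        apply Finset.sum_congr rfl
        intro g hg
        have hgmem : ∀ C (hC : C ∈ τ), IsNCPartition C (g C hC) :=
          fun C hC => mem_NCset.1 (Finset.mem_pi.1 hg C hC)
        rw [Finset.prod_mul_distrib, nu_glue μ hτ' hgmem,
          extMul_glue φ a hτ' hgmem]
    _ = ∑ P ∈ (NCset (Finset.range n)).filter (fun P => refines P τ),
          nu μ P τ * extMul φ P a :=
        (sum_filter_refines hτ (fun P => nu μ P τ * extMul φ P a)).symm
    _ = ∑ P ∈ (NCset (Finset.range n)).filter (fun P => refines P τ),
          μ P τ * extMul φ P a := by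
        apply Finset.sum_congr rfl
        intro P hP
        rw [Finset.mem_filter] at hP
        rw [mu_eq_nu hμ hn P hP.1 τ hτ hP.2]

end Steps3

/-- Möbius inversion over the lattice of non-crossing partitions:
the four formulations of the moment–cumulant relations are equivalent. -/
theorem stmt1 {S : Type*}
    (φ κ : ∀ n, (Fin n → S) → ℂ)
    (μ : Finset (Finset ℕ) → Finset (Finset ℕ) → ℂ)
    (hμ : ∀ n : ℕ, 1 ≤ n → ∀ π ∈ NCset (Finset.range n), ∀ τ ∈ NCset (Finset.range n),
      refines π τ →
      (∑ ρ ∈ (NCset (Finset.range n)).filter (fun ρ => refines π ρ ∧ refines ρ τ), μ ρ τ)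
        = if π = τ then 1 else 0) :
    List.TFAE
      [ (∀ n : ℕ, 1 ≤ n → ∀ a : ℕ → S,
          φ n (fun i => a i.1) = ∑ P ∈ NCset (Finset.range n), extMul κ P a),
        (∀ n : ℕ, 1 ≤ n → ∀ a : ℕ → S,
          κ n (fun i => a i.1) = ∑ P ∈ NCset (Finset.range n),
            μ P {Finset.range n} * extMul φ P a),
        (∀ n : ℕ, 1 ≤ n → ∀ τ ∈ NCset (Finset.range n), ∀ a : ℕ → S,
          extMul φ τ a = ∑ P ∈ (NCset (Finset.range n)).filter (fun P => refines P τ),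
            extMul κ P a),
        (∀ n : ℕ, 1 ≤ n → ∀ τ ∈ NCset (Finset.range n), ∀ a : ℕ → S,
          extMul κ τ a = ∑ P ∈ (NCset (Finset.range n)).filter (fun P => refines P τ),
            μ P τ * extMul φ P a) ] := by
  tfae_have 1 → 3 := step13 φ κ
  tfae_have 3 → 1 := step31 φ κ
  tfae_have 3 → 4 := step34 φ κ μ hμ
  tfae_have 4 → 3 := step43 φ κ μ hμ
  tfae_have 4 → 2 := step42 φ κ μ
  tfae_have 2 → 4 := step24 φ κ μ hμ
  tfae_finish
end

section
/- Let [q] = D ⊔ E, π ∈ NC(D), and π̃ ∈ NC(E) its maximal non-crossing completion. If ρ ∈ NC(E) satisfies ρ ≤ π̃, then π ⊔ ρ ∈ NC(q). Conversely, if π ⊔ ρ ∈ NC(q) for ρ ∈ NC(E), then ρ ≤ π̃. -/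
open Finset

attribute [local instance] Classical.propDecidable

/-- The set {ρ ∈ NC(E) : π ⊔ ρ ∈ NC(q)} is exactly the order ideal generated by π̃. -/
theorem stmt18 (q : ℕ) (D E : Finset ℕ) (hDE : Disjoint D E)
    (hu : D ∪ E = Finset.range q)
    (π : Finset (Finset ℕ)) (hπ : IsNCPartition D π)
    (πt : Finset (Finset ℕ)) (hπt : IsNCPartition E πt)
    (hjoin : IsNCPartition (Finset.range q) (π ∪ πt))
    (hmax : ∀ ρ, IsNCPartition E ρ → IsNCPartition (Finset.range q) (π ∪ ρ) →
      refines ρ πt) :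
    ∀ ρ, IsNCPartition E ρ →
      (refines ρ πt ↔ IsNCPartition (Finset.range q) (π ∪ ρ)) := by
  intro ρ hρ
  constructor
  · intro href
    obtain ⟨hπ1, hπ2, hπ3, hπ4, hπ5⟩ := hπ
    obtain ⟨hρ1, hρ2, hρ3, hρ4, hρ5⟩ := hρ
    obtain ⟨hj1, hj2, hj3, hj4, hj5⟩ := hjoin
    refine ⟨?_, ?_, ?_, ?_, ?_⟩
    · intro B hB
      rcases Finset.mem_union.1 hB with h | h
      exacts [hπ1 B h, hρ1 B h]
    · intro B hB
      rcases Finset.mem_union.1 hB with h | h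
      · exact (hπ2 B h).trans (by rw [← hu]; exact Finset.subset_union_left)
      · exact (hρ2 B h).trans (by rw [← hu]; exact Finset.subset_union_right)
    · intro x hx
      rw [← hu, Finset.mem_union] at hx
      rcases hx with h | h
      · obtain ⟨B, hB, hxB⟩ := hπ3 x h
        exact ⟨B, Finset.mem_union_left _ hB, hxB⟩
      · obtain ⟨B, hB, hxB⟩ := hρ3 x h
        exact ⟨B, Finset.mem_union_right _ hB, hxB⟩
    · intro B hB B' hB' hne
      rcases Finset.mem_union.1 hB with h | h <;> rcases Finset.mem_union.1 hB' with h' | h'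
      · exact hπ4 B h B' h' hne
      · exact hDE.mono (hπ2 B h) (hρ2 B' h')
      · exact (hDE.mono (hπ2 B' h') (hρ2 B h)).symm
      · exact hρ4 B h B' h' hne
    · intro B hB B' hB' hne a ha b hb c hc d hd habcd
      rcases Finset.mem_union.1 hB with h | h <;> rcases Finset.mem_union.1 hB' with h' | h'
      · exact hπ5 B h B' h' hne a ha b hb c hc d hd habcd
      · obtain ⟨C, hC, hsub⟩ := href B' h'
        have hBC : B ≠ C := by
          rintro rfl
          obtain ⟨x, hx⟩ := hπ1 B h
          exact Finset.disjoint_left.1 hDE (hπ2 B h hx) (hπt.2.1 B hC hx)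
        exact hj5 B (Finset.mem_union_left _ h) C (Finset.mem_union_right _ hC) hBC
          a ha b (hsub hb) c hc d (hsub hd) habcd
      · obtain ⟨C, hC, hsub⟩ := href B h
        have hBC : C ≠ B' := by
          rintro rfl
          obtain ⟨x, hx⟩ := hπ1 C h'
          exact Finset.disjoint_left.1 hDE (hπ2 C h' hx) (hπt.2.1 C hC hx)
        exact hj5 C (Finset.mem_union_right _ hC) B' (Finset.mem_union_left _ h') hBC
          a (hsub ha) b hb c (hsub hc) d hd habcd
      · exact hρ5 B h B' h' hne a ha b hb c hc d hd habcd
  · exact fun hnc => hmax ρ hρ hnc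
end
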